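/- arXiv:math/0207185 — 2 statements merged into one kernel-verified Lean document; each statement's English description precedes it below -/
import Mathlib

section
/- Suspension preserves game value: for any position X (an abstract simplicial complex on vertex set A), the game played on the suspension ΣX (on vertex set A ∪ {x, y} with x, y new vertices) has the same win/loss value as the game on X; in particular X is a second-player win iff ΣX is a second-player win. -/
variable {α : Type*} [DecidableEq α]

/-- Playing move `a` in position `K` removes every simplex containing `a`. -/
def gameMove (K : Finset (Finset α)) (a : Finset α) : Finset (Finset α) :=
  K.filter fun b => ¬ a ⊆ b

/-- The player to move wins position `K` (normal play). -/
def FirstWins (K : Finset (Finset α)) : Prop :=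
  ∃ a : {a // a ∈ K}, ¬ FirstWins (gameMove K a.1)
termination_by K.card
decreasing_by
  refine Finset.card_lt_card ?_
  refine (Finset.ssubset_iff_of_subset (Finset.filter_subset _ _)).mpr ?_
  exact ⟨a.1, a.2, by simp⟩

/-- Standard starting position: all proper non-empty subsets of `A`. -/
def startPos (A : Finset α) : Finset (Finset α) :=
  A.powerset.filter fun s => s ≠ ∅ ∧ s ≠ A

/-- The filled simplex: all non-empty subsets of `A`, including `A`. -/
def fullSimplex (A : Finset α) : Finset (Finset α) :=
  A.powerset.filter fun s => s ≠ ∅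

/-- `K` is an abstract simplicial complex of non-empty sets. -/
def IsComplex (K : Finset (Finset α)) : Prop :=
  ∀ a ∈ K, a ≠ ∅ ∧ ∀ b ⊆ a, b ≠ ∅ → b ∈ K

/-- Suspension of `X` by two new vertices `x` and `y`. -/
def suspension (K : Finset (Finset α)) (x y : α) : Finset (Finset α) :=
  K ∪ K.image (insert x) ∪ K.image (insert y) ∪ {{x}, {y}}

section SuspAux

variable {x y : α}

theorem firstWins_def (K : Finset (Finset α)) :
    FirstWins K ↔ ∃ a ∈ K, ¬ FirstWins (gameMove K a) := by
  rw [FirstWins]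
  exact ⟨fun ⟨a, h⟩ => ⟨a.1, a.2, h⟩, fun ⟨a, ha, h⟩ => ⟨⟨a, ha⟩, h⟩⟩

/-- All members are nonempty and avoid `x` and `y`. -/
def Good (x y : α) (K : Finset (Finset α)) : Prop :=
  ∀ s ∈ K, s ≠ ∅ ∧ x ∉ s ∧ y ∉ s

/-- Generalized suspension-type position. -/
def susp2 (x y : α) (K Lx Ly : Finset (Finset α)) : Finset (Finset α) :=
  K ∪ Lx.image (insert x) ∪ Ly.image (insert y) ∪ {{x}, {y}}

lemma good_mono {K K' : Finset (Finset α)} (h : K' ⊆ K) (hK : Good x y K) : Good x y K' :=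
  fun s hs => hK s (h hs)

lemma gm_subset (K : Finset (Finset α)) (c : Finset α) : gameMove K c ⊆ K :=
  Finset.filter_subset _ _

lemma gm_union (A B : Finset (Finset α)) (c : Finset α) :
    gameMove (A ∪ B) c = gameMove A c ∪ gameMove B c :=
  Finset.filter_union _ _ _

lemma gm_all {K : Finset (Finset α)} {c : Finset α} (h : ∀ b ∈ K, ¬ c ⊆ b) :
    gameMove K c = K :=
  Finset.filter_true_of_mem h

lemma gm_none {K : Finset (Finset α)} {c : Finset α} (h : ∀ b ∈ K, c ⊆ b) :
    gameMove K c = ∅ :=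
  Finset.filter_false_of_mem (fun b hb => not_not_intro (h b hb))

lemma gm_ssubset {K : Finset (Finset α)} {c : Finset α} (hc : c ∈ K) :
    gameMove K c ⊂ K := by
  refine (Finset.ssubset_iff_of_subset (Finset.filter_subset _ _)).mpr ?_
  exact ⟨c, hc, by simp⟩

lemma gm_card_lt {K : Finset (Finset α)} {c : Finset α} (hc : c ∈ K) :
    (gameMove K c).card < K.card :=
  Finset.card_lt_card (gm_ssubset hc)

lemma gm_image_base {L : Finset (Finset α)} {c : Finset α} (hc : x ∉ c) :
    gameMove (L.image (insert x)) c = (gameMove L c).image (insert x) := by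
  ext s
  simp only [gameMove, Finset.mem_filter, Finset.mem_image]
  constructor
  · rintro ⟨⟨b, hb, rfl⟩, hns⟩
    exact ⟨b, ⟨hb, fun hcb => hns (hcb.trans (Finset.subset_insert _ _))⟩, rfl⟩
  · rintro ⟨b, ⟨hb, hcb⟩, rfl⟩
    exact ⟨⟨b, hb, rfl⟩, fun h => hcb ((Finset.subset_insert_iff_of_notMem hc).mp h)⟩

lemma gm_image_ins {L : Finset (Finset α)} {a : Finset α} (hxa : x ∉ a) :
    gameMove (L.image (insert x)) (insert x a) = (gameMove L a).image (insert x) := by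
  ext s
  simp only [gameMove, Finset.mem_filter, Finset.mem_image]
  constructor
  · rintro ⟨⟨b, hb, rfl⟩, hns⟩
    exact ⟨b, ⟨hb, fun hab => hns (Finset.insert_subset_insert _ hab)⟩, rfl⟩
  · rintro ⟨b, ⟨hb, hab⟩, rfl⟩
    refine ⟨⟨b, hb, rfl⟩, fun h => hab ?_⟩
    intro v hv
    rcases Finset.mem_insert.mp (h (Finset.mem_insert_of_mem hv)) with h1 | h1
    · exact absurd (h1 ▸ hv) hxa
    · exact h1

lemma gm_no_x {K : Finset (Finset α)} {a : Finset α} (h : ∀ s ∈ K, x ∉ s) :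
    gameMove K (insert x a) = K :=
  gm_all (fun b hb hsub => h b hb (hsub (Finset.mem_insert_self _ _)))

lemma gm_singleton_mem {K : Finset (Finset α)} (h : ∀ s ∈ K, x ∉ s) :
    gameMove K {x} = K :=
  gm_all (fun b hb hsub => h b hb (Finset.singleton_subset_iff.mp hsub))

lemma gm_pair {c : Finset α} (hc : ∃ v ∈ c, v ≠ x ∧ v ≠ y) :
    gameMove ({{x}, {y}} : Finset (Finset α)) c = {{x}, {y}} := by
  obtain ⟨v, hv, hvx, hvy⟩ := hc
  apply gm_all
  intro b hb hsub
  rcases Finset.mem_insert.mp hb with rfl | hb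
  · exact hvx (Finset.mem_singleton.mp (hsub hv))
  · rw [Finset.mem_singleton] at hb; subst hb
    exact hvy (Finset.mem_singleton.mp (hsub hv))

lemma susp2_comm (K Lx Ly : Finset (Finset α)) :
    susp2 x y K Lx Ly = susp2 y x K Ly Lx := by
  ext s
  simp only [susp2, Finset.mem_union, Finset.mem_insert, Finset.mem_singleton]
  tauto

lemma good_witness {c : Finset α} (h1 : c ≠ ∅) (h2 : x ∉ c) (h3 : y ∉ c) :
    ∃ v ∈ c, v ≠ x ∧ v ≠ y := by
  obtain ⟨v, hv⟩ := Finset.nonempty_iff_ne_empty.mpr h1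
  exact ⟨v, hv, fun h => h2 (h ▸ hv), fun h => h3 (h ▸ hv)⟩

lemma gm_susp_base {K Lx Ly : Finset (Finset α)} {c : Finset α}
    (hc : c ≠ ∅) (hcx : x ∉ c) (hcy : y ∉ c) :
    gameMove (susp2 x y K Lx Ly) c =
      susp2 x y (gameMove K c) (gameMove Lx c) (gameMove Ly c) := by
  unfold susp2
  rw [gm_union, gm_union, gm_union, gm_image_base hcx, gm_image_base hcy,
    gm_pair (good_witness hc hcx hcy)]

lemma gm_susp_x (hxy : x ≠ y) {K Lx Ly : Finset (Finset α)} {a : Finset α}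
    (ha : a ≠ ∅) (hax : x ∉ a) (hay : y ∉ a)
    (hKx : ∀ s ∈ K, x ∉ s) (hLyx : ∀ b ∈ Ly, x ∉ b) :
    gameMove (susp2 x y K Lx Ly) (insert x a) = susp2 x y K (gameMove Lx a) Ly := by
  have hy' : ∀ s ∈ Ly.image (insert y), x ∉ s := by
    intro s hs
    obtain ⟨b, hb, rfl⟩ := Finset.mem_image.mp hs
    intro hxs
    rcases Finset.mem_insert.mp hxs with h1 | h1
    · exact hxy h1
    · exact hLyx b hb h1
  have hv : ∃ v ∈ insert x a, v ≠ x ∧ v ≠ y := by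
    obtain ⟨v, hv, h2, h3⟩ := good_witness ha hax hay
    exact ⟨v, Finset.mem_insert_of_mem hv, h2, h3⟩
  unfold susp2
  rw [gm_union, gm_union, gm_union, gm_no_x hKx, gm_image_ins hax, gm_no_x hy',
    gm_pair hv]

lemma gm_susp_sing (hxy : x ≠ y) {K Lx Ly : Finset (Finset α)}
    (hKx : ∀ s ∈ K, x ∉ s) (hLyx : ∀ b ∈ Ly, x ∉ b) :
    gameMove (susp2 x y K Lx Ly) {x} = K ∪ Ly.image (insert y) ∪ {{y}} := by
  have hy' : ∀ s ∈ Ly.image (insert y), x ∉ s := by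
    intro s hs
    obtain ⟨b, hb, rfl⟩ := Finset.mem_image.mp hs
    intro hxs
    rcases Finset.mem_insert.mp hxs with h1 | h1
    · exact hxy h1
    · exact hLyx b hb h1
  have h1 : gameMove (Lx.image (insert x)) {x} = ∅ := by
    apply gm_none
    intro b hb
    obtain ⟨c, hc, rfl⟩ := Finset.mem_image.mp hb
    exact Finset.singleton_subset_iff.mpr (Finset.mem_insert_self _ _)
  have h2 : gameMove ({{x}, {y}} : Finset (Finset α)) {x} = {{y}} := by
    simp [gameMove, Finset.filter_insert, Finset.filter_singleton,
      Finset.singleton_subset_iff, hxy, Ne.symm hxy]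
  unfold susp2
  rw [gm_union, gm_union, gm_union, gm_singleton_mem hKx, h1, gm_singleton_mem hy', h2,
    Finset.union_empty]

/-- The cone-type position reached after playing `{x}` is a first-player win
when `K` is a P-position: answer with `{y}`. -/
lemma cone_firstWins (hxy : x ≠ y) {K Ly : Finset (Finset α)}
    (hKy : ∀ s ∈ K, y ∉ s) (hKP : ¬ FirstWins K) :
    FirstWins (K ∪ Ly.image (insert y) ∪ {{y}}) := by
  rw [firstWins_def]
  refine ⟨{y}, Finset.mem_union_right _ (Finset.mem_singleton_self _), ?_⟩
  have h1 : gameMove (Ly.image (insert y)) {y} = ∅ := by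
    apply gm_none
    intro b hb
    obtain ⟨c, hc, rfl⟩ := Finset.mem_image.mp hb
    exact Finset.singleton_subset_iff.mpr (Finset.mem_insert_self _ _)
  have h2 : gameMove ({{y}} : Finset (Finset α)) {y} = ∅ := by
    apply gm_none; simp
  rw [gm_union, gm_union, gm_singleton_mem hKy, h1, h2, Finset.union_empty,
    Finset.union_empty]
  exact hKP

end SuspAux

section SuspMain

variable {x y : α}

lemma susp2_P (hxy : x ≠ y) :
    ∀ n (K L : Finset (Finset α)), K.card + L.card ≤ n →
      Good x y K → Good x y L → ¬ FirstWins K → ¬ FirstWins (susp2 x y K L L) := by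
  intro n
  induction n using Nat.strong_induction_on with
  | _ n IH =>
  intro K L hn hGK hGL hKP hFW
  obtain ⟨m, hm, hP⟩ := (firstWins_def _).mp hFW
  have hKx : ∀ s ∈ K, x ∉ s := fun s hs => (hGK s hs).2.1
  have hKy : ∀ s ∈ K, y ∉ s := fun s hs => (hGK s hs).2.2
  have hLx : ∀ s ∈ L, x ∉ s := fun s hs => (hGL s hs).2.1
  have hLy : ∀ s ∈ L, y ∉ s := fun s hs => (hGL s hs).2.2
  simp only [susp2, Finset.mem_union, Finset.mem_image, Finset.mem_insert,
    Finset.mem_singleton] at hm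
  rcases hm with (((hmK | ⟨a, haL, rfl⟩) | ⟨a, haL, rfl⟩) | (rfl | rfl))
  · -- base move m ∈ K
    obtain ⟨hm1, hm2, hm3⟩ := hGK m hmK
    rw [gm_susp_base hm1 hm2 hm3] at hP
    have hK1W : FirstWins (gameMove K m) := by
      by_contra h
      exact hKP ((firstWins_def K).mpr ⟨m, hmK, h⟩)
    obtain ⟨b, hbK1, hb⟩ := (firstWins_def _).mp hK1W
    apply hP
    rw [firstWins_def]
    refine ⟨b, Finset.mem_union_left _ (Finset.mem_union_left _
      (Finset.mem_union_left _ hbK1)), ?_⟩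
    obtain ⟨hb1, hb2, hb3⟩ := hGK b (gm_subset K m hbK1)
    rw [gm_susp_base hb1 hb2 hb3]
    have hcard : (gameMove (gameMove K m) b).card + (gameMove (gameMove L m) b).card < n := by
      have h1 : (gameMove (gameMove K m) b).card < (gameMove K m).card := gm_card_lt hbK1
      have h2 : (gameMove K m).card < K.card := gm_card_lt hmK
      have h3 : (gameMove (gameMove L m) b).card ≤ L.card :=
        Finset.card_le_card ((gm_subset _ _).trans (gm_subset _ _))
      omega
    exact IH _ hcard _ _ le_rfl
      (good_mono ((gm_subset _ _).trans (gm_subset _ _)) hGK)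
      (good_mono ((gm_subset _ _).trans (gm_subset _ _)) hGL) hb
  · -- move insert x a, a ∈ L : mirror with insert y a
    obtain ⟨ha1, ha2, ha3⟩ := hGL a haL
    rw [gm_susp_x hxy ha1 ha2 ha3 hKx hLx] at hP
    apply hP
    rw [firstWins_def]
    refine ⟨insert y a, Finset.mem_union_left _ (Finset.mem_union_right _
      (Finset.mem_image_of_mem _ haL)), ?_⟩
    have e2 : gameMove (susp2 x y K (gameMove L a) L) (insert y a)
        = susp2 x y K (gameMove L a) (gameMove L a) := by
      rw [susp2_comm, gm_susp_x (Ne.symm hxy) ha1 ha3 ha2 hKy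
        (fun b hb => hLy b (gm_subset _ _ hb)), susp2_comm]
    rw [e2]
    have hcard : K.card + (gameMove L a).card < n := by
      have := gm_card_lt haL
      omega
    exact IH _ hcard _ _ le_rfl hGK (good_mono (gm_subset _ _) hGL) hKP
  · -- move insert y a, a ∈ L : mirror with insert x a
    obtain ⟨ha1, ha2, ha3⟩ := hGL a haL
    have e1 : gameMove (susp2 x y K L L) (insert y a) = susp2 x y K L (gameMove L a) := by
      rw [susp2_comm, gm_susp_x (Ne.symm hxy) ha1 ha3 ha2 hKy hLy, susp2_comm]
    rw [e1] at hP
    apply hP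
    rw [firstWins_def]
    refine ⟨insert x a, Finset.mem_union_left _ (Finset.mem_union_left _
      (Finset.mem_union_right _ (Finset.mem_image_of_mem _ haL))), ?_⟩
    rw [gm_susp_x hxy ha1 ha2 ha3 hKx (fun b hb => hLx b (gm_subset _ _ hb))]
    have hcard : K.card + (gameMove L a).card < n := by
      have := gm_card_lt haL
      omega
    exact IH _ hcard _ _ le_rfl hGK (good_mono (gm_subset _ _) hGL) hKP
  · -- move {x} : answer {y}
    rw [gm_susp_sing hxy hKx hLx] at hP
    exact hP (cone_firstWins hxy hKy hKP)
  · -- move {y} : answer {x}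
    have e1 : gameMove (susp2 x y K L L) {y} = K ∪ L.image (insert x) ∪ {{x}} := by
      rw [susp2_comm, gm_susp_sing (Ne.symm hxy) hKy hLy]
    rw [e1] at hP
    exact hP (cone_firstWins (Ne.symm hxy) hKx hKP)

end SuspMain

theorem stmt6 (K : Finset (Finset α)) (x y : α) (hK : IsComplex K) (hxy : x ≠ y)
    (hx : ∀ a ∈ K, x ∉ a) (hy : ∀ a ∈ K, y ∉ a) :
    (FirstWins (suspension K x y) ↔ FirstWins K) := by
  have hG : Good x y K := fun s hs => ⟨(hK s hs).1, hx s hs, hy s hs⟩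
  have hsusp : suspension K x y = susp2 x y K K K := rfl
  constructor
  · intro hS
    by_contra hKP
    exact susp2_P hxy _ K K le_rfl hG hG hKP (hsusp ▸ hS)
  · intro hFW
    obtain ⟨a, ha, hP⟩ := (firstWins_def K).mp hFW
    rw [hsusp, firstWins_def]
    obtain ⟨ha1, ha2, ha3⟩ := hG a ha
    refine ⟨a, Finset.mem_union_left _ (Finset.mem_union_left _
      (Finset.mem_union_left _ ha)), ?_⟩
    rw [gm_susp_base ha1 ha2 ha3]
    exact susp2_P hxy _ _ _ le_rfl (good_mono (gm_subset _ _) hG)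
      (good_mono (gm_subset _ _) hG) hP
end

section
/- The simplicial complex on vertex set {1,2,3,5} with facets {1,2,3} and {3,5} (a filled triangle with one pendant edge attached at vertex 3) is a second-player win. -/
variable {α : Type*} [DecidableEq α]

/-- Filled triangle 123 with pendant edge 3–5. -/
def trianglePendant : Finset (Finset ℕ) :=
  {{1}, {2}, {3}, {5}, {1, 2}, {1, 3}, {2, 3}, {1, 2, 3}, {3, 5}}

def fwB : ℕ → Finset (Finset ℕ) → Bool
  | 0, _ => false
  | n+1, K => decide (∃ a ∈ K, fwB n (gameMove K a) = false)

theorem fw_unfold (K : Finset (Finset ℕ)) :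
    FirstWins K ↔ ∃ a ∈ K, ¬ FirstWins (gameMove K a) := by
  rw [FirstWins]
  exact ⟨fun ⟨a, h⟩ => ⟨a.1, a.2, h⟩, fun ⟨a, ha, h⟩ => ⟨⟨a, ha⟩, h⟩⟩

theorem card_gameMove_lt {K : Finset (Finset ℕ)} {a : Finset ℕ} (ha : a ∈ K) :
    (gameMove K a).card < K.card := by
  refine Finset.card_lt_card ?_
  refine (Finset.ssubset_iff_of_subset (Finset.filter_subset _ _)).mpr ?_
  exact ⟨a, ha, by simp⟩

theorem fw_iff : ∀ (n : ℕ) (K : Finset (Finset ℕ)), K.card ≤ n →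
    (FirstWins K ↔ fwB n K = true) := by
  intro n
  induction n with
  | zero =>
    intro K hK
    have : K = ∅ := Finset.card_eq_zero.mp (Nat.le_zero.mp hK)
    subst this
    rw [fw_unfold]
    simp [fwB]
  | succ n ih =>
    intro K hK
    rw [fw_unfold, fwB, decide_eq_true_iff]
    constructor
    · rintro ⟨a, ha, h⟩
      refine ⟨a, ha, ?_⟩
      have hcard : (gameMove K a).card ≤ n := by
        have := card_gameMove_lt ha; omega
      rw [← Bool.not_eq_true, ← ih _ hcard] at *
      simpa using h
    · rintro ⟨a, ha, h⟩
      refine ⟨a, ha, ?_⟩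
      have hcard : (gameMove K a).card ≤ n := by
        have := card_gameMove_lt ha; omega
      rw [ih _ hcard]
      simp [h]

theorem stmt17 : ¬ FirstWins trianglePendant := by
  rw [fw_iff 9 trianglePendant (by decide)]
  decide
end
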